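/- Let m be a metric on the edges of G*π fulfilling the lower triangle inequality. Then for every st-path K in G*π that is not an up-down path, there exists an up-down st-path Q such that Q is strictly higher than K and the length of Q under m is at most the length of K under m. -/

import Mathlib

/-!
A path that is not up-down passes through a valley `u - z - w`, with `z` ranked below both
neighbours. When `z` was contracted, `u` and `w` were still present, so `G*π` contains the
shortcut `u - w`, and by the lower triangle inequality it is no longer than `u - z - w`.
Bypassing the valley replaces two entries `rk z` of the rank sequence by the single entry
`min (rk u) (rk w) > rk z`, so the path becomes strictly higher and loses an edge; iterating
ends at an up-down path.
-/

open SimpleGraph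
open scoped ENNReal

variable {V : Type*}

/-- One step of vertex contraction: remove `v` from the current graph and add an edge
between every pair of its current neighbors. -/
def chStep (H : SimpleGraph V) (v : V) : SimpleGraph V where
  Adj a b := a ≠ b ∧ a ≠ v ∧ b ≠ v ∧ (H.Adj a b ∨ (H.Adj v a ∧ H.Adj v b))
  symm := by
    constructor
    rintro a b ⟨h1, h2, h3, h4⟩
    refine ⟨h1.symm, h3, h2, ?_⟩
    rcases h4 with h | ⟨ha, hb⟩
    · exact Or.inl h.symm
    · exact Or.inr ⟨hb, ha⟩
  loopless := ⟨fun a h => h.1 rfl⟩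

/-- All edges ever present while contracting the vertices of the list in order:
the edges of the initial graph together with all added shortcuts. -/
def chList : SimpleGraph V → List V → SimpleGraph V
  | H, [] => H
  | H, v :: l => H ⊔ chList (chStep H v) l

/-- The rank of a vertex with respect to the contraction order `π`. -/
def rk {n : ℕ} (π : Fin n ≃ V) (v : V) : ℕ := (π.symm v : ℕ)

/-- The contraction hierarchy `G*π`: contract `π 0, π 1, …` in this order and collect
all original edges and all added shortcuts. -/
def chGraph {n : ℕ} (G : SimpleGraph V) (π : Fin n ≃ V) : SimpleGraph V :=
  chList G ((List.finRange n).map ⇑π)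

/-- A list of vertices is up-down w.r.t. a rank function: ranks strictly increase
along a prefix and strictly decrease along the remaining suffix, the two parts
meeting at the maximum-rank vertex. -/
def IsUpDown (r : V → ℕ) (l : List V) : Prop :=
  ∃ l₁ x l₂, l = l₁ ++ x :: l₂ ∧
    List.Chain' (fun a b => r a < r b) (l₁ ++ [x]) ∧
    List.Chain' (fun a b => r b < r a) (x :: l₂)

/-- Reachability in the upward directed graph `G^∧π` (edges of `G*π` directed from
lower to higher rank): the vertex set of the search space `SS v`. -/
def UpReach {n : ℕ} (G : SimpleGraph V) (π : Fin n ≃ V) (v u : V) : Prop :=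
  Relation.ReflTransGen (fun a b => (chGraph G π).Adj a b ∧ rk π a < rk π b) v u

/-- Length of a walk: the sum of the weights of its edges. -/
noncomputable def wlen {H : SimpleGraph V} (m : V → V → ℝ≥0∞) {s t : V}
    (p : H.Walk s t) : ℝ≥0∞ :=
  (p.darts.map (fun d => m d.toProd.1 d.toProd.2)).sum

/-- Shortest path distance in a graph `H` under edge weights `m`. -/
noncomputable def gdist (H : SimpleGraph V) (m : V → V → ℝ≥0∞) (s t : V) : ℝ≥0∞ :=
  ⨅ (p : H.Walk s t), wlen m p

/-- Minimum length of an up-down `s`-`t` path in `G*π`. -/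
noncomputable def updist {n : ℕ} (G : SimpleGraph V) (π : Fin n ≃ V)
    (m : V → V → ℝ≥0∞) (s t : V) : ℝ≥0∞ :=
  ⨅ (p : (chGraph G π).Walk s t) (_ : IsUpDown (rk π) p.support), wlen m p

/-- Minimum length of a strictly rank-increasing `u`-`v` path in `G*π`. -/
noncomputable def upOnlyDist {n : ℕ} (G : SimpleGraph V) (π : Fin n ≃ V)
    (m : V → V → ℝ≥0∞) (u v : V) : ℝ≥0∞ :=
  ⨅ (p : (chGraph G π).Walk u v)
    (_ : List.Chain' (fun a b => rk π a < rk π b) p.support), wlen m p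

/-- `S` is a balanced separator of the subgraph of `G` induced by `U`. -/
def IsBalancedSepOn [DecidableEq V] (G : SimpleGraph V) (U S : Finset V) : Prop :=
  S ⊆ U ∧ ∃ A B : Finset V, A ⊆ U ∧ B ⊆ U ∧
    Disjoint A B ∧ Disjoint A S ∧ Disjoint B S ∧ A ∪ B ∪ S = U ∧
    (∀ a ∈ A, ∀ b ∈ B, ¬ G.Adj a b) ∧
    3 * A.card ≤ 2 * U.card ∧ 3 * B.card ≤ 2 * U.card

/-- Nested dissection orders (as lists, earliest contracted first, separator last)
of induced subgraphs of `G`, in which the separator chosen at every recursion step on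
a `k`-vertex subgraph is balanced and has cardinality at most `c * k ^ α`. -/
inductive IsNDOrder [DecidableEq V] (G : SimpleGraph V) (c α : ℝ) : Finset V → List V → Prop
  | empty : IsNDOrder G c α ∅ []
  | step {U S A B : Finset V} {lA lB lS : List V} :
      Disjoint A B → Disjoint A S → Disjoint B S → A ∪ B ∪ S = U →
      (∀ a ∈ A, ∀ b ∈ B, ¬ G.Adj a b) →
      3 * A.card ≤ 2 * U.card → 3 * B.card ≤ 2 * U.card →
      ((S.card : ℝ) ≤ c * (U.card : ℝ) ^ α) →
      lS.Nodup → lS.toFinset = S →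
      IsNDOrder G c α A lA → IsNDOrder G c α B lB →
      IsNDOrder G c α U (lA ++ lB ++ lS)

/-- Number of vertices of the search space `SS v` in `G^∧π`. -/
noncomputable def nVertsSS {n : ℕ} (G : SimpleGraph V) (π : Fin n ≃ V) (v : V) : ℕ :=
  {u | UpReach G π v u}.ncard

/-- Number of arcs of the search space `SS v` in `G^∧π`: arcs of `G^∧π` with both
endpoints reachable from `v`. -/
noncomputable def nArcsSS {n : ℕ} (G : SimpleGraph V) (π : Fin n ≃ V) (v : V) : ℕ :=
  {q : V × V | (chGraph G π).Adj q.1 q.2 ∧ rk π q.1 < rk π q.2 ∧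
    UpReach G π v q.1 ∧ UpReach G π v q.2}.ncard

/-- The rank sequence of a walk: for each edge, the minimum of the ranks of its
endpoints, sorted in decreasing order. -/
def rankSeq {H : SimpleGraph V} (r : V → ℕ) {s t : V} (p : H.Walk s t) : List ℕ :=
  (p.darts.map (fun d => min (r d.toProd.1) (r d.toProd.2))).insertionSort (· ≥ ·)

/-- Directed length of a walk in `G*π` under a pair of directed metrics `(mu, md)`:
each edge traversed from lower rank to higher rank costs its upward weight,
each edge traversed from higher rank to lower rank costs its downward weight. -/
noncomputable def dlen {H : SimpleGraph V} (r : V → ℕ) (mu md : V → V → ℝ≥0∞)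
    {s t : V} (p : H.Walk s t) : ℝ≥0∞ :=
  (p.darts.map (fun d =>
    if r d.toProd.1 < r d.toProd.2 then mu d.toProd.1 d.toProd.2
    else md d.toProd.2 d.toProd.1)).sum

/-- Length of a directed walk `s :: l` under arc weights `wD`. -/
noncomputable def dWalkLen (wD : V → V → ℝ≥0∞) : V → List V → ℝ≥0∞
  | _, [] => 0
  | s, x :: l => wD s x + dWalkLen wD x l

/-- Shortest directed path distance in the directed graph `D` under arc weights `wD`. -/
noncomputable def ddist (D : V → V → Prop) (wD : V → V → ℝ≥0∞) (s t : V) : ℝ≥0∞ :=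
  ⨅ (l : List V) (_ : List.Chain D s l ∧ l.getLastD s = t), dWalkLen wD s l

section RankSequences

open List

variable {α : Type*}

/-- `A` and `B` first differ at a position where `A` has the smaller entry; for rank
sequences this is the paper's "`B` is strictly higher than `A`". -/
def StrictlyLower [LT α] (A B : List α) : Prop :=
  ∃ c a b A' B', a < b ∧ A = c ++ a :: A' ∧ B = c ++ b :: B'

namespace StrictlyLower

variable [Preorder α] {A B C : List α}

theorem not_isPrefix (h : StrictlyLower A B) : ¬ A <+: B := by
  obtain ⟨c, a, b, A', B', hab, rfl, rfl⟩ := h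
  rw [prefix_append_right_inj, cons_prefix_cons]
  exact fun h => hab.ne h.1

theorem not_isPrefix_symm (h : StrictlyLower A B) : ¬ B <+: A := by
  obtain ⟨c, a, b, A', B', hab, rfl, rfl⟩ := h
  rw [prefix_append_right_inj, cons_prefix_cons]
  exact fun h => hab.ne' h.1

theorem lex (h : StrictlyLower A B) : List.Lex (· < ·) A B := by
  obtain ⟨c, a, b, A', B', hab, rfl, rfl⟩ := h
  induction c with
  | nil => exact .rel hab
  | cons x c ih => exact .cons ih

theorem trans (h₁ : StrictlyLower A B) (h₂ : StrictlyLower B C) : StrictlyLower A C := by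
  obtain ⟨c, a, b, A', B', hab, rfl, hB⟩ := h₁
  obtain ⟨d, b', e, B'', C', hbe, hB', rfl⟩ := h₂
  rcases append_eq_append_iff.1 (hB.symm.trans hB') with ⟨x, rfl, hx⟩ | ⟨x, rfl, hx⟩
  · cases x with
    | nil =>
      obtain ⟨rfl, rfl⟩ : b = b' ∧ B' = B'' := by simpa using hx
      exact ⟨c, a, e, A', C', hab.trans hbe, by simp, by simp⟩
    | cons y x =>
      obtain ⟨rfl, rfl⟩ : b = y ∧ B' = x ++ b' :: B'' := by simpa using hx
      exact ⟨c, a, b, A', x ++ e :: C', hab, rfl, by simp⟩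
  · cases x with
    | nil =>
      obtain ⟨rfl, rfl⟩ : b' = b ∧ B'' = B' := by simpa using hx
      exact ⟨d, a, e, A', C', hab.trans hbe, by simp, by simp⟩
    | cons y x =>
      obtain ⟨rfl, rfl⟩ : b' = y ∧ B'' = x ++ b :: B' := by simpa using hx
      exact ⟨d, b', e, x ++ a :: A', C', hbe, by simp, rfl⟩

end StrictlyLower

variable [LinearOrder α]

theorem List.insertionSort_ge_eq_of_perm {l l' : List α} (h : l ~ l') :
    l.insertionSort (· ≥ ·) = l'.insertionSort (· ≥ ·) :=
  Perm.eq_of_pairwise' (pairwise_insertionSort _ _) (pairwise_insertionSort _ _)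
    ((perm_insertionSort _ l).trans (h.trans (perm_insertionSort _ l').symm))

theorem List.insertionSort_ge_append {l₁ l₂ : List α} (h : ∀ a ∈ l₁, ∀ b ∈ l₂, b ≤ a) :
    (l₁ ++ l₂).insertionSort (· ≥ ·) = l₁.insertionSort (· ≥ ·) ++ l₂.insertionSort (· ≥ ·) := by
  refine Perm.eq_of_pairwise' (pairwise_insertionSort _ _) ?_
    ((perm_insertionSort _ _).trans
      ((perm_insertionSort _ _).append (perm_insertionSort _ _)).symm)
  refine pairwise_append.2 ⟨pairwise_insertionSort _ _, pairwise_insertionSort _ _,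
    fun a ha b hb => ?_⟩
  exact h a (mem_insertionSort _ |>.1 ha) b (mem_insertionSort _ |>.1 hb)

theorem strictlyLower_insertionSort_append {l M : List α} {b : α} (hl : l ≠ [])
    (hlb : ∀ a ∈ l, a < b) :
    StrictlyLower ((l ++ M).insertionSort (· ≥ ·)) ((b :: M).insertionSort (· ≥ ·)) := by
  set M₁ := M.filter (fun x => b ≤ x)
  set M₂ := M.filter (fun x => !decide (b ≤ x))
  have hM : M₁ ++ M₂ ~ M := filter_append_perm _ M
  have hM₁ : ∀ x ∈ M₁, b ≤ x := fun x hx => by simpa using (mem_filter.1 hx).2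
  have hM₂ : ∀ x ∈ M₂, x < b := fun x hx => by simpa using (mem_filter.1 hx).2
  have hlow : ∀ x ∈ l ++ M₂, x < b := by
    simp only [mem_append]
    rintro x (hx | hx)
    exacts [hlb x hx, hM₂ x hx]
  obtain ⟨a, ha⟩ := exists_mem_of_ne_nil l hl
  obtain ⟨g, S, hgS⟩ := exists_cons_of_ne_nil
    (ne_nil_of_mem ((mem_insertionSort (· ≥ ·)).2 (mem_append_left M₂ ha)))
  have hg : g < b := hlow g ((mem_insertionSort (· ≥ ·)).1 (hgS ▸ mem_cons_self))
  -- both sorted lists start with the sorted entries `≥ b` of `M`; then come `b` on the right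
  -- and an entry `< b` on the left
  refine ⟨M₁.insertionSort (· ≥ ·), g, b, S, M₂.insertionSort (· ≥ ·), hg, ?_, ?_⟩
  · rw [← hgS, ← insertionSort_ge_append fun x hx y hy => (hlow y hy).le.trans (hM₁ x hx)]
    exact insertionSort_ge_eq_of_perm ((hM.symm.append_left l).trans (perm_append_comm_assoc _ _ _))
  · rw [← insertionSort_cons_of_forall_rel (· ≥ ·) fun x hx => (hM₂ x hx).le,
      ← insertionSort_ge_append fun x hx y hy => ?_]
    · exact insertionSort_ge_eq_of_perm ((hM.symm.cons b).trans perm_middle.symm)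
    · rcases mem_cons.1 hy with rfl | hy
      exacts [hM₁ x hx, (hM₂ y hy).le.trans (hM₁ x hx)]

end RankSequences

theorem le_chList (H : SimpleGraph V) (l : List V) : H ≤ chList H l := by
  cases l with
  | nil => exact le_rfl
  | cons v l => exact le_sup_left

theorem not_adj_chList_of_isolated {H : SimpleGraph V} {v : V} (hv : ∀ w, ¬ H.Adj v w)
    (l : List V) (w : V) : ¬ (chList H l).Adj v w := by
  induction l generalizing H with
  | nil => exact hv w
  | cons u l ih =>
    rintro (hvw | hvw)
    · exact hv w hvw
    · refine ih (H := chStep H u) (fun w' hvw' => ?_) hvw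
      rcases hvw'.2.2.2 with hvw' | ⟨huv, -⟩
      exacts [hv w' hvw', hv u huv.symm]

theorem chList_adj_of_lower_common_neighbor {H : SimpleGraph V} {l₁ l₂ : List V} {x y z : V}
    (hx : x ∉ l₁) (hy : y ∉ l₁) (hz : z ∉ l₁) (hxy : x ≠ y)
    (hxz : (chList H (l₁ ++ z :: l₂)).Adj x z) (hzy : (chList H (l₁ ++ z :: l₂)).Adj z y) :
    (chList H (l₁ ++ z :: l₂)).Adj x y := by
  induction l₁ generalizing H with
  | nil =>
    -- contracting `z` isolates it, so its edges so far are those of `H`, and it joins `x` to `y`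
    have hz_iso : ∀ w, ¬ (chStep H z).Adj z w := fun w h => h.2.1 rfl
    have hxz : H.Adj x z :=
      hxz.resolve_right fun h => not_adj_chList_of_isolated hz_iso l₂ x h.symm
    have hzy : H.Adj z y := hzy.resolve_right (not_adj_chList_of_isolated hz_iso l₂ y)
    exact Or.inr (le_chList _ l₂ ⟨hxy, hxz.ne, hzy.ne', Or.inr ⟨hxz.symm, hzy⟩⟩)
  | cons v l₁ ih =>
    simp only [List.mem_cons, not_or] at hx hy hz
    have lift : ∀ {a b}, a ≠ v → b ≠ v → (chList H (v :: (l₁ ++ z :: l₂))).Adj a b →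
        (chList (chStep H v) (l₁ ++ z :: l₂)).Adj a b := fun hav hbv hab =>
      hab.elim (fun h => le_chList _ _ ⟨h.ne, hav, hbv, Or.inl h⟩) id
    exact Or.inr (ih hx.2 hy.2 hz.2 (lift hx.1 hz.1 hxz) (lift hz.1 hy.1 hzy))

theorem rk_injective {n : ℕ} (π : Fin n ≃ V) : Function.Injective (rk π) :=
  fun _ _ h => π.symm.injective (Fin.ext h)

theorem exists_map_finRange_eq_append_cons {n : ℕ} (π : Fin n ≃ V) (z : V) :
    ∃ l₁ l₂, (List.finRange n).map π = l₁ ++ z :: l₂ ∧ ∀ v ∈ l₁, rk π v < rk π z := by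
  have hrk : ∀ i (hi : i < ((List.finRange n).map π).length),
      rk π ((List.finRange n).map π)[i] = i := by
    simp [rk]
  obtain ⟨l₁, l₂, hL⟩ :=
    List.append_of_mem (List.mem_map.2 ⟨π.symm z, List.mem_finRange _, π.apply_symm_apply z⟩)
  refine ⟨l₁, l₂, hL, fun v hv => ?_⟩
  obtain ⟨i, hi, rfl⟩ := List.getElem_of_mem hv
  have hrz : rk π z = l₁.length := by
    simpa [hL] using hrk l₁.length (by simp [hL])
  have hrv : rk π l₁[i] = i := by
    simpa [hL, List.getElem_append_left hi] using hrk i (by simp [hL]; omega)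
  omega

theorem chGraph_adj_of_lower_common_neighbor {n : ℕ} (G : SimpleGraph V) (π : Fin n ≃ V)
    {x y z : V} (hxy : x ≠ y) (hxz : (chGraph G π).Adj x z) (hzy : (chGraph G π).Adj z y)
    (hzx : rk π z < rk π x) (hzy' : rk π z < rk π y) :
    (chGraph G π).Adj x y := by
  obtain ⟨l₁, l₂, hL, hl₁⟩ := exists_map_finRange_eq_append_cons π z
  rw [chGraph, hL] at hxz hzy ⊢
  exact chList_adj_of_lower_common_neighbor (fun h => (hl₁ x h).not_gt hzx)
    (fun h => (hl₁ y h).not_gt hzy') (fun h => (hl₁ z h).false) hxy hxz hzy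

section Walks

variable {r : V → ℕ}

theorem IsUpDown.cons_of_lt {s b : V} {l : List V} (h : IsUpDown r (b :: l)) (hsb : r s < r b) :
    IsUpDown r (s :: b :: l) := by
  obtain ⟨l₁, x, l₂, hl, hup, hdown⟩ := h
  refine ⟨s :: l₁, x, l₂, by rw [hl]; rfl, hup.cons fun c hc => ?_, hdown⟩
  obtain rfl : c = b := by cases l₁ <;> simp_all
  exact hsb

theorem IsUpDown.cons_of_gt {s b : V} {l : List V} (h : IsUpDown r (b :: l)) (hbs : r b < r s) :
    IsUpDown r (s :: b :: l) ∨ ∃ d l', l = d :: l' ∧ r b < r d := by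
  obtain ⟨_ | ⟨c, l₁⟩, x, l₂, hl, hup, hdown⟩ := h
  · obtain ⟨rfl, rfl⟩ : b = x ∧ l = l₂ := by simpa using hl
    exact Or.inl ⟨[], s, b :: l, rfl, .singleton _, hdown.cons fun c hc => by simp_all⟩
  · obtain ⟨rfl, rfl⟩ : b = c ∧ l = l₁ ++ x :: l₂ := by simpa using hl
    obtain ⟨d, l', hd⟩ := List.exists_cons_of_ne_nil
      (List.append_ne_nil_of_right_ne_nil l₁ (List.cons_ne_nil x []))
    refine Or.inr ⟨d, l' ++ l₂, by rw [← List.cons_append, ← hd, List.append_assoc]; rfl, ?_⟩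
    rw [List.cons_append, hd] at hup
    exact (List.isChain_cons_cons.1 hup).1

theorem SimpleGraph.Walk.isUpDown_or_exists_valley {H : SimpleGraph V}
    (hr : Function.Injective r) {s t : V} (K : H.Walk s t) :
    IsUpDown r K.support ∨ ∃ (u z w : V) (p : H.Walk s u) (huz : H.Adj u z) (hzw : H.Adj z w)
      (q : H.Walk w t), K = p.append (.cons huz (.cons hzw q)) ∧ r z < r u ∧ r z < r w := by
  induction K with
  | nil => exact Or.inl ⟨[], _, [], rfl, .singleton _, .singleton _⟩
  | @cons s b t hsb K ih =>
    rcases ih with hK | ⟨u, z, w, p, huz, hzw, q, rfl, hru, hrw⟩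
    · rw [← Walk.cons_tail_support] at hK
      rw [Walk.support_cons, ← Walk.cons_tail_support]
      rcases (hr.ne hsb.ne).lt_or_gt with hlt | hgt
      · exact Or.inl (hK.cons_of_lt hlt)
      · rcases hK.cons_of_gt hgt with hK | ⟨d, l', hl, hbd⟩
        · exact Or.inl hK
        · cases K with
          | nil => simp at hl
          | @cons _ c _ hbc K =>
            rw [Walk.support_cons, List.tail_cons, ← Walk.cons_tail_support] at hl
            obtain rfl : c = d := (List.cons.inj hl).1
            exact Or.inr ⟨s, b, _, .nil, hsb, hbc, K, rfl, hgt, hbd⟩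
    · exact Or.inr ⟨u, z, w, .cons hsb p, huz, hzw, q, rfl, hru, hrw⟩

end Walks

section Bypass

open List

variable {H : SimpleGraph V} {s t u z w : V} (p : H.Walk s u) (huz : H.Adj u z) (hzw : H.Adj z w)
  (q : H.Walk w t) (huw : H.Adj u w)

theorem wlen_append {s u t : V} (m : V → V → ℝ≥0∞) (p : H.Walk s u) (q : H.Walk u t) :
    wlen m (p.append q) = wlen m p + wlen m q := by
  simp [wlen, Walk.darts_append]

theorem wlen_cons {s u t : V} (m : V → V → ℝ≥0∞) (h : H.Adj s u) (p : H.Walk u t) :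
    wlen m (.cons h p) = m s u + wlen m p := by
  simp [wlen]

theorem wlen_bypass_le {m : V → V → ℝ≥0∞} (hm : m u w ≤ m u z + m z w) :
    wlen m (p.append (.cons huw q)) ≤ wlen m (p.append (.cons huz (.cons hzw q))) := by
  rw [wlen_append, wlen_append, wlen_cons, wlen_cons, wlen_cons, ← add_assoc (m u z)]
  gcongr

theorem SimpleGraph.Walk.IsPath.ne_of_bypass
    (hK : (p.append (.cons huz (.cons hzw q))).IsPath) : u ≠ w := by
  rw [Walk.isPath_def, Walk.support_append, Walk.support_cons, List.tail_cons,
    Walk.support_cons, nodup_append] at hK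
  exact hK.2.2 u p.end_mem_support w (mem_cons_of_mem z q.start_mem_support)

theorem SimpleGraph.Walk.IsPath.bypass (hK : (p.append (.cons huz (.cons hzw q))).IsPath) :
    (p.append (.cons huw q)).IsPath := by
  rw [Walk.isPath_def, Walk.support_append, Walk.support_cons, List.tail_cons] at hK ⊢
  rw [Walk.support_cons] at hK
  exact hK.sublist ((sublist_cons_self z q.support).append_left p.support)

theorem rankSeq_bypass {r : V → ℕ} (hru : r z < r u) (hrw : r z < r w) :
    StrictlyLower (rankSeq r (p.append (.cons huz (.cons hzw q))))
      (rankSeq r (p.append (.cons huw q))) := by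
  set f : H.Dart → ℕ := fun d => min (r d.toProd.1) (r d.toProd.2)
  have hK : (p.darts ++ Dart.mk (u, z) huz :: Dart.mk (z, w) hzw :: q.darts).map f ~
      [r z, r z] ++ (p.darts.map f ++ q.darts.map f) := by
    simp only [map_append, map_cons, f, min_eq_right hru.le, min_eq_left hrw.le]
    exact perm_middle.trans (perm_middle.cons _)
  have hK' : (p.darts ++ Dart.mk (u, w) huw :: q.darts).map f ~
      min (r u) (r w) :: (p.darts.map f ++ q.darts.map f) := by
    simp only [map_append, map_cons, f]
    exact perm_middle
  simp only [rankSeq, Walk.darts_append, Walk.darts_cons]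
  rw [insertionSort_ge_eq_of_perm hK, insertionSort_ge_eq_of_perm hK']
  exact strictlyLower_insertionSort_append (cons_ne_nil _ _) (by simp [hru, hrw])

end Bypass

theorem SimpleGraph.Walk.IsPath.exists_isUpDown {H : SimpleGraph V} {r : V → ℕ}
    (hr : Function.Injective r)
    (hH : ∀ x y z, x ≠ y → H.Adj x z → H.Adj z y → r z < r x → r z < r y → H.Adj x y)
    {m : V → V → ℝ≥0∞}
    (hm : ∀ x y z, H.Adj x y → H.Adj x z → H.Adj z y → r z < r x → r z < r y →
      m x y ≤ m x z + m z y)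
    {s t : V} {K : H.Walk s t} (hK : K.IsPath) (hKud : ¬ IsUpDown r K.support) :
    ∃ Q : H.Walk s t, Q.IsPath ∧ IsUpDown r Q.support ∧
      StrictlyLower (rankSeq r K) (rankSeq r Q) ∧ wlen m Q ≤ wlen m K := by
  obtain ⟨u, z, w, p, huz, hzw, q, rfl, hru, hrw⟩ :=
    (K.isUpDown_or_exists_valley hr).resolve_left hKud
  have huw : H.Adj u w := hH u w z (hK.ne_of_bypass p huz hzw q) huz hzw hru hrw
  have hK' := hK.bypass p huz hzw q huw
  have hseq := rankSeq_bypass p huz hzw q huw hru hrw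
  have hwlen := wlen_bypass_le p huz hzw q huw (hm u w z huw huz hzw hru hrw)
  by_cases hK'ud : IsUpDown r (p.append (.cons huw q)).support
  · exact ⟨_, hK', hK'ud, hseq, hwlen⟩
  · obtain ⟨Q, hQ, hQud, hQseq, hQlen⟩ := hK'.exists_isUpDown hr hH hm hK'ud
    exact ⟨Q, hQ, hQud, hseq.trans hQseq, hQlen.trans hwlen⟩
termination_by K.length
decreasing_by simp_all

theorem stmt10_general {V : Type*} {n : ℕ} (G : SimpleGraph V)
    (π : Fin n ≃ V) (m : V → V → ℝ≥0∞)
    (hlti : ∀ x y z, (chGraph G π).Adj x y → (chGraph G π).Adj x z →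
      (chGraph G π).Adj z y → rk π z < rk π x → rk π z < rk π y →
      m x y ≤ m x z + m z y)
    (s t : V) (K : (chGraph G π).Walk s t) (hK : K.IsPath)
    (hKnotud : ¬ IsUpDown (rk π) K.support) :
    ∃ Q : (chGraph G π).Walk s t, Q.IsPath ∧ IsUpDown (rk π) Q.support ∧
      ¬ (rankSeq (rk π) Q <+: rankSeq (rk π) K) ∧
      ¬ (rankSeq (rk π) K <+: rankSeq (rk π) Q) ∧
      List.Lex (· < ·) (rankSeq (rk π) K) (rankSeq (rk π) Q) ∧
      wlen m Q ≤ wlen m K := by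
  obtain ⟨Q, hQ, hQud, hKQ, hQK⟩ := hK.exists_isUpDown (rk_injective π)
    (fun _ _ _ => chGraph_adj_of_lower_common_neighbor G π) hlti hKnotud
  exact ⟨Q, hQ, hQud, hKQ.not_isPrefix_symm, hKQ.not_isPrefix, hKQ.lex, hQK⟩

/-- If `m` fulfills the lower triangle inequality, then every
`s`-`t` path `K` in `G*π` that is not up-down can be replaced by an up-down
`s`-`t` path `Q` that is strictly higher than `K` and no longer than `K`. -/
theorem stmt10 {V : Type*} {n : ℕ} (G : SimpleGraph V) (hG : G.Connected)
    (π : Fin n ≃ V) (m : V → V → ℝ≥0∞)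
    (hm_symm : ∀ a b, m a b = m b a)
    (hm_pos : ∀ a b, (chGraph G π).Adj a b → 0 < m a b)
    (hlti : ∀ x y z, (chGraph G π).Adj x y → (chGraph G π).Adj x z →
      (chGraph G π).Adj z y → rk π z < rk π x → rk π z < rk π y →
      m x y ≤ m x z + m z y)
    (s t : V) (K : (chGraph G π).Walk s t) (hK : K.IsPath)
    (hKnotud : ¬ IsUpDown (rk π) K.support) :
    ∃ Q : (chGraph G π).Walk s t, Q.IsPath ∧ IsUpDown (rk π) Q.support ∧
      ¬ (rankSeq (rk π) Q <+: rankSeq (rk π) K) ∧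
      ¬ (rankSeq (rk π) K <+: rankSeq (rk π) Q) ∧
      List.Lex (· < ·) (rankSeq (rk π) K) (rankSeq (rk π) Q) ∧
      wlen m Q ≤ wlen m K :=
  stmt10_general G π m hlti s t K hK hKnotud
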